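/- Let n ≥ 3 and let u be a word in x_1,...,x_n in which every variable occurs exactly twice, such that u[x_1,x_2,x_3] = (x_2 x_3 x_1)(x_3 x_1 x_2), and: for each odd 1 ≤ i < n, u[x_i,x_{i+1}] = x_{i+1} x_i² x_{i+1}; for each even 2 ≤ i < n, u[x_i,x_{i+1}] = x_i x_{i+1}² x_i; for each 1 ≤ i < j ≤ n with j−i ∈ {2,3}, u[x_i,x_j] ∈ {x_i x_j x_i x_j, x_j x_i x_j x_i}; and for each odd 3 ≤ j ≤ n, u[x_1,x_j] ∈ {x_1 x_j x_1 x_j, x_j x_1 x_j x_1}. Then u equals the word S_n. -/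

import Mathlib

/-- Insert `x` right after the first letter of a list. -/
def insert2 (x : ℕ) : List ℕ → List ℕ
  | [] => [x]
  | a :: t => a :: x :: t

/-- The two linear parts of the double-linear word `S n`:
`S 1 = x₁²`; for odd `k`, `x_{k+1}` is prepended to the first part and inserted after
the first letter of the second part; for even `k`, vice versa. -/
def sPair : ℕ → List ℕ × List ℕ
  | 0 => ([], [])
  | 1 => ([1], [1])
  | (k+2) =>
    let p := sPair (k+1)
    if (k+1) % 2 = 1 then ((k+2) :: p.1, insert2 (k+2) p.2)
    else (insert2 (k+2) p.1, (k+2) :: p.2)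

/-- The word `S n`, e.g. `S 8 = (x₈x₆x₇x₄x₅x₂x₃x₁)(x₇x₈x₅x₆x₃x₄x₁x₂)`. -/
def sW (n : ℕ) : List ℕ := (sPair n).1 ++ (sPair n).2

/-- Projection of a word to the two variables `i`, `j` (deleting all other letters). -/
def proj2 (u : List ℕ) (i j : ℕ) : List ℕ := u.filter (fun a => a == i || a == j)

/-!
Induction on `n`. Deleting both occurrences of `x_{n+1}` from `u` leaves a word satisfying the
same conditions for `n`, hence equal to `S_n`; so `u` is `S_n` with two copies of `x_{n+1}`
inserted. For `v = n, n-1, n-2` (and `v = 1` when `n` is even) the projection of `u` onto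
`{x_v, x_{n+1}}` fixes how many occurrences of `x_v` lie before, between and after the two copies.
In `S_n` the letters `x_n, x_{n-1}, x_{n-2}` open the two halves, `x_1` closes the first half, and
the second half is a permutation of `x_1, …, x_n`; this pins down both insertion points, and they
are those of `S_{n+1}`.
-/

namespace List

variable {α : Type*}

theorem append_cons_inj_of_not_mem {a : α} {s₁ s₂ t₁ t₂ : List α}
    (h₁ : a ∉ s₁) (h₂ : a ∉ s₂) : s₁ ++ a :: t₁ = s₂ ++ a :: t₂ ↔ s₁ = s₂ ∧ t₁ = t₂ := by
  refine ⟨fun h => ?_, fun ⟨h₁, h₂⟩ => h₁ ▸ h₂ ▸ rfl⟩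
  rcases append_eq_append_iff.mp h with ⟨c, rfl, hc⟩ | ⟨c, rfl, hc⟩
  · cases c with
    | nil => simpa using hc
    | cons x c => simp only [cons_append, cons.injEq] at hc; simp [← hc.1] at h₂
  · cases c with
    | nil => simpa using hc.symm
    | cons x c => simp only [cons_append, cons.injEq] at hc; simp [← hc.1] at h₁

variable [BEq α]

theorem IsSuffix.cons_suffix_of_count_lt {a : α} {C Y l : List α} (hC : C <:+ l)
    (hY : a :: Y <:+ l) (h : Y.count a < C.count a) : a :: Y <:+ C := by
  rcases suffix_or_suffix_of_suffix hC hY with hCY | hYC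
  · rcases suffix_cons_iff.mp hCY with rfl | hCY
    · exact suffix_refl _
    · exact absurd (hCY.count_le a) (by omega)
  · exact hYC

variable [LawfulBEq α]

theorem exists_eq_append_cons_append_cons_of_count_eq_two {a : α} {l : List α}
    (h : l.count a = 2) :
    ∃ A B C, l = A ++ a :: (B ++ a :: C) ∧ a ∉ A ∧ a ∉ B ∧ a ∉ C := by
  obtain ⟨A, t, rfl, hA⟩ := eq_append_cons_of_mem (count_pos_iff.mp (by omega : 0 < l.count a))
  have ht : t.count a = 1 := by simpa [count_append, count_eq_zero.mpr hA] using h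
  obtain ⟨B, C, rfl, hB⟩ := eq_append_cons_of_mem (count_pos_iff.mp (by omega : 0 < t.count a))
  refine ⟨A, B, C, rfl, hA, hB, count_eq_zero.mp ?_⟩
  simpa [count_append, count_eq_zero.mpr hB] using ht

theorem filter_filter_bne {a : α} {p : α → Bool} (h : p a = false) (l : List α) :
    (l.filter (· != a)).filter p = l.filter p := by
  rw [filter_filter]
  refine filter_congr fun x _ => ?_
  by_cases hx : x = a
  · simp [hx, h]
  · simp [hx]

theorem filter_bne_append_cons_append_cons {a : α} {A B C : List α} (hA : a ∉ A) (hB : a ∉ B)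
    (hC : a ∉ C) : (A ++ a :: (B ++ a :: C)).filter (· != a) = A ++ B ++ C := by
  have : ∀ {D : List α}, a ∉ D → D.filter (· != a) = D := fun hD =>
    filter_eq_self.mpr fun x hx => bne_iff_ne.mpr fun h => hD (h ▸ hx)
  simp [filter_append, this hA, this hB, this hC]

theorem IsSuffix.suffix_of_count_le {a : α} {C Y l : List α} (hC : C <:+ l) (hY : a :: Y <:+ l)
    (h : C.count a ≤ Y.count a) : C <:+ Y := by
  rcases suffix_or_suffix_of_suffix hC hY with hCY | hYC
  · rcases suffix_cons_iff.mp hCY with rfl | hCY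
    · simp at h
    · exact hCY
  · have := hYC.count_le a
    rw [count_cons_self] at this
    omega

theorem IsPrefix.prefix_of_count_le {a : α} {A X l : List α} (hA : A <+: l) (hX : X ++ [a] <+: l)
    (h : A.count a ≤ X.count a) : A <+: X := by
  rcases prefix_or_prefix_of_prefix hA hX with hAX | hXA
  · rcases prefix_concat_iff.mp hAX with rfl | hAX
    · simp at h
    · exact hAX
  · have := hXA.count_le a
    rw [count_append, count_singleton_self] at this
    omega

end List

open List

theorem proj2_append_cons_append_cons {v N : ℕ} {A B C : List ℕ} (hA : N ∉ A)
    (hB : N ∉ B) (hC : N ∉ C) :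
    proj2 (A ++ N :: (B ++ N :: C)) v N = replicate (A.count v) v ++
      N :: (replicate (B.count v) v ++ N :: replicate (C.count v) v) := by
  have : ∀ {D : List ℕ}, N ∉ D →
      D.filter (fun a => a == v || a == N) = replicate (D.count v) v := fun hD => by
    rw [← filter_beq]
    exact filter_congr fun x hx => by simp [show x ≠ N from fun h => hD (h ▸ hx)]
  simp [proj2, filter_append, this hA, this hB, this hC]

theorem count_eq_of_proj2_eq {v N a b c : ℕ} (hv : v ≠ N) {A B C : List ℕ} (hA : N ∉ A)
    (hB : N ∉ B) (hC : N ∉ C)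
    (h : proj2 (A ++ N :: (B ++ N :: C)) v N =
      replicate a v ++ N :: (replicate b v ++ N :: replicate c v)) :
    A.count v = a ∧ B.count v = b ∧ C.count v = c := by
  have hN : ∀ {k : ℕ}, N ∉ replicate k v := fun h => hv (eq_of_mem_replicate h).symm
  rw [proj2_append_cons_append_cons hA hB hC, append_cons_inj_of_not_mem hN hN,
    append_cons_inj_of_not_mem hN hN] at h
  simp only [replicate_inj] at h
  exact ⟨h.1.1, h.2.1.1, h.2.2.1⟩

theorem count_add_count_eq_one_of_proj2 {v N : ℕ} (hv : v ≠ N) {A B C : List ℕ} (hA : N ∉ A)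
    (hB : N ∉ B) (hC : N ∉ C)
    (h : proj2 (A ++ N :: (B ++ N :: C)) v N = [v, N, v, N] ∨
      proj2 (A ++ N :: (B ++ N :: C)) v N = [N, v, N, v]) :
    A.count v + C.count v = 1 := by
  rcases h with h | h
  · have := count_eq_of_proj2_eq (a := 1) (b := 1) (c := 0) hv hA hB hC h
    omega
  · have := count_eq_of_proj2_eq (a := 0) (b := 1) (c := 1) hv hA hB hC h
    omega

theorem insert2_perm (x : ℕ) (l : List ℕ) : insert2 x l ~ x :: l := by
  cases l with
  | nil => rfl
  | cons a t => exact Perm.swap x a t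

theorem sPair_succ {m : ℕ} (hm : 1 ≤ m) : sPair (m + 1) =
    if m % 2 = 1 then ((m + 1) :: (sPair m).1, insert2 (m + 1) (sPair m).2)
    else (insert2 (m + 1) (sPair m).1, (m + 1) :: (sPair m).2) := by
  obtain ⟨k, rfl⟩ : ∃ k, m = k + 1 := ⟨m - 1, by omega⟩
  rfl

theorem sPair_snd_perm : ∀ n, (sPair n).2 ~ range' 1 n
  | 0 => Perm.refl _
  | 1 => Perm.refl _
  | k + 2 => by
    have ih := sPair_snd_perm (k + 1)
    have hcons : (k + 2) :: (sPair (k + 1)).2 ~ range' 1 (k + 2) := by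
      rw [range'_concat, one_mul, Nat.add_comm 1]
      exact (ih.cons _).trans (perm_append_singleton _ _).symm
    rw [sPair_succ (by omega)]
    split_ifs
    · exact (insert2_perm _ _).trans hcons
    · exact hcons

theorem sPair_shape {n : ℕ} (hn : 3 ≤ n) :
    (Odd n → ∃ P Q, sPair n = ((n - 1) :: n :: (P ++ [1]), n :: (n - 2) :: (n - 1) :: Q)) ∧
    (Even n → ∃ P G, sPair n = (n :: (n - 2) :: (n - 1) :: (P ++ [1]), (n - 1) :: n :: G)) := by
  induction n, hn using Nat.le_induction with
  | base => exact ⟨fun _ => ⟨[], [], rfl⟩, fun h => absurd h (by decide)⟩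
  | succ n hn ih =>
    rw [sPair_succ (by omega), Nat.odd_add_one, Nat.even_add_one, Nat.not_even_iff_odd,
      Nat.not_odd_iff_even]
    have h1 : n + 1 - 1 = n := rfl
    have h2 : n + 1 - 2 = n - 1 := rfl
    refine ⟨fun he => ?_, fun ho => ?_⟩
    · obtain ⟨P, G, hS⟩ := ih.2 he
      refine ⟨(n - 2) :: (n - 1) :: P, G, ?_⟩
      rw [if_neg (Nat.not_odd_iff_even.mpr he ∘ Nat.odd_iff.mpr), hS, h1]
      rfl
    · obtain ⟨P, Q, hS⟩ := ih.1 ho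
      refine ⟨P, (n - 2) :: (n - 1) :: Q, ?_⟩
      rw [if_pos (Nat.odd_iff.mp ho), hS, h1, h2]
      rfl

theorem nodup_sPair_snd (n : ℕ) : (sPair n).2.Nodup :=
  (sPair_snd_perm n).nodup_iff.mpr nodup_range'

theorem mem_sPair_snd {n i : ℕ} (h₁ : 1 ≤ i) (h₂ : i ≤ n) : i ∈ (sPair n).2 :=
  (sPair_snd_perm n).mem_iff.mpr (mem_range'_1.mpr ⟨h₁, by omega⟩)

theorem exists_sPair_eq_of_odd {n : ℕ} (hn : 3 ≤ n) (hodd : Odd n) :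
    ∃ P Q, sPair n = ((n - 1) :: n :: (P ++ [1]), n :: (n - 2) :: (n - 1) :: Q) ∧
      n - 2 ∉ (n - 1) :: Q := by
  obtain ⟨P, Q, hS⟩ := (sPair_shape hn).1 hodd
  have hnodup := nodup_sPair_snd n
  rw [hS, nodup_cons, nodup_cons] at hnodup
  exact ⟨P, Q, hS, hnodup.2.1⟩

theorem exists_sPair_eq_of_even {n : ℕ} (hn : 3 ≤ n) (heven : Even n) :
    ∃ P G, sPair n = (n :: (n - 2) :: (n - 1) :: (P ++ [1]), (n - 1) :: n :: G) ∧
      n - 1 ∉ n :: G ∧ n ∉ G ∧ n - 2 ∈ G ∧ 1 ∈ (n - 1) :: n :: G := by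
  obtain ⟨P, G, hS⟩ := (sPair_shape hn).2 heven
  have hnodup := nodup_sPair_snd n
  rw [hS, nodup_cons, nodup_cons] at hnodup
  have hmem : ∀ i, 1 ≤ i → i ≤ n → i ∈ (n - 1) :: n :: G := fun i h₁ h₂ => by
    simpa only [hS] using mem_sPair_snd (n := n) h₁ h₂
  have hG₂ : n - 2 ∈ G := by
    have hn4 : 4 ≤ n := by obtain ⟨k, rfl⟩ := heven; omega
    have := hmem (n - 2) (by omega) (by omega)
    simp only [mem_cons] at this
    exact (this.resolve_left (by omega)).resolve_left (by omega)
  exact ⟨P, G, hS, hnodup.1, hnodup.2.1, hG₂, hmem 1 le_rfl (by omega)⟩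

/-- Condition (iii) of Proposition 4.2 on a word `u` in `x₁, …, xₙ`. -/
structure HasSProjections (n : ℕ) (u : List ℕ) : Prop where
  mem_Icc : ∀ a ∈ u, 1 ≤ a ∧ a ≤ n
  count_eq_two : ∀ i : ℕ, 1 ≤ i → i ≤ n → u.count i = 2
  proj_one_two_three : u.filter (fun a => a == 1 || a == 2 || a == 3) = [2, 3, 1, 3, 1, 2]
  proj_succ_of_odd : ∀ i : ℕ, 1 ≤ i → i < n → Odd i → proj2 u i (i+1) = [i+1, i, i, i+1]
  proj_succ_of_even : ∀ i : ℕ, 2 ≤ i → i < n → Even i →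
    proj2 u i (i+1) = [i, i+1, i+1, i]
  proj_alternating : ∀ i j : ℕ, 1 ≤ i → i < j → j ≤ n → (j - i = 2 ∨ j - i = 3) →
    proj2 u i j = [i, j, i, j] ∨ proj2 u i j = [j, i, j, i]
  proj_one_alternating : ∀ j : ℕ, 3 ≤ j → j ≤ n → Odd j →
    proj2 u 1 j = [1, j, 1, j] ∨ proj2 u 1 j = [j, 1, j, 1]

namespace HasSProjections

theorem eq_sW_three {u : List ℕ} (h : HasSProjections 3 u) : u = sW 3 := by
  have hsW : sW 3 = [2, 3, 1, 3, 1, 2] := rfl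
  rw [hsW, ← h.proj_one_two_three, eq_comm, filter_eq_self]
  intro a ha
  have := h.mem_Icc a ha
  simp only [Bool.or_eq_true, beq_iff_eq]
  omega

theorem filter_bne {n : ℕ} (hn : 3 ≤ n) {u : List ℕ} (h : HasSProjections (n + 1) u) :
    HasSProjections n (u.filter (· != n + 1)) := by
  have hproj : ∀ i j, i ≠ n + 1 → j ≠ n + 1 →
      proj2 (u.filter (· != n + 1)) i j = proj2 u i j := fun i j hi hj =>
    filter_filter_bne (by simp [Ne.symm hi, Ne.symm hj]) u
  refine ⟨fun a ha => ?_, fun i h1 h2 => ?_, ?_, fun i h1 h2 hi => ?_, fun i h1 h2 hi => ?_,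
    fun i j h1 h2 h3 hij => ?_, fun j h1 h2 hj => ?_⟩
  · obtain ⟨hu, hne⟩ := mem_filter.mp ha
    have := h.mem_Icc a hu
    simp only [bne_iff_ne] at hne
    omega
  · rw [count_filter (p := (· != n + 1)) (bne_iff_ne.mpr (by omega))]
    exact h.count_eq_two i h1 (by omega)
  · rw [filter_filter_bne (by simp only [Bool.or_eq_false_iff, beq_eq_false_iff_ne]; omega)]
    exact h.proj_one_two_three
  · rw [hproj i (i + 1) (by omega) (by omega)]
    exact h.proj_succ_of_odd i h1 (by omega) hi
  · rw [hproj i (i + 1) (by omega) (by omega)]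
    exact h.proj_succ_of_even i h1 (by omega) hi
  · rw [hproj i j (by omega) (by omega)]
    exact h.proj_alternating i j h1 h2 (by omega) hij
  · rw [hproj 1 j (by omega) (by omega)]
    exact h.proj_one_alternating j h1 (by omega) hj

theorem count_add_count_eq_one {n v : ℕ} {A B C : List ℕ}
    (h : HasSProjections (n + 1) (A ++ (n + 1) :: (B ++ (n + 1) :: C)))
    (hA : n + 1 ∉ A) (hB : n + 1 ∉ B) (hC : n + 1 ∉ C) (hv₁ : 1 ≤ v) (hv₂ : n - 2 ≤ v)
    (hv : v < n) : A.count v + C.count v = 1 :=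
  count_add_count_eq_one_of_proj2 (by omega) hA hB hC
    (h.proj_alternating v (n + 1) hv₁ (by omega) le_rfl (by omega))

end HasSProjections


section Insertion

variable {n : ℕ} {A B C : List ℕ}

theorem append_cons_append_cons_eq_sW_succ_of_odd (hn : 3 ≤ n) (hodd : Odd n)
    (hA : n + 1 ∉ A) (hB : n + 1 ∉ B) (hC : n + 1 ∉ C) (hw : A ++ B ++ C = sW n)
    (h : HasSProjections (n + 1) (A ++ (n + 1) :: (B ++ (n + 1) :: C))) :
    A ++ (n + 1) :: (B ++ (n + 1) :: C) = sW (n + 1) := by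
  obtain ⟨P, Q, hS, hQ⟩ := exists_sPair_eq_of_odd hn hodd
  have hsW : sW n = (n - 1) :: n :: (P ++ [1]) ++ n :: (n - 2) :: (n - 1) :: Q := by rw [sW, hS]
  have hcn := count_eq_of_proj2_eq (a := 0) (b := 2) (c := 0) (by omega) hA hB hC
    (h.proj_succ_of_odd n (by omega) (by omega) hodd)
  have hc₂ := h.count_add_count_eq_one hA hB hC (v := n - 2) (by omega) (by omega) (by omega)
  have hc₁ := h.count_add_count_eq_one hA hB hC (v := n - 1) (by omega) (by omega) (by omega)
  have hApre : A <+: sW n := hw ▸ append_assoc A B C ▸ prefix_append A (B ++ C)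
  have hCsuf : C <:+ sW n := hw ▸ suffix_append (A ++ B) C
  have hA₁ : A <+: [n - 1] :=
    hApre.prefix_of_count_le (a := n) (by rw [hsW]; exact ⟨_, rfl⟩) (by omega)
  have hCeq : C = (n - 2) :: (n - 1) :: Q := by
    have hC₁ : C <:+ (n - 2) :: (n - 1) :: Q :=
      hCsuf.suffix_of_count_le (a := n) (by rw [hsW]; exact suffix_append _ _) (by omega)
    have hA₂ : A.count (n - 2) = 0 :=
      count_eq_zero.mpr fun hm => absurd (mem_singleton.mp (hA₁.subset hm)) (by omega)
    refine hC₁.eq_of_length_le (hCsuf.cons_suffix_of_count_lt ?_ ?_).length_le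
    · rw [hsW]; exact (suffix_cons _ _).trans (suffix_append _ _)
    · rw [count_eq_zero.mpr hQ]; omega
  have hAnil : A = [] := by
    refine prefix_nil.mp
      (hApre.prefix_of_count_le (a := n - 1) (by rw [hsW]; exact ⟨_, rfl⟩) ?_)
    have : 0 < C.count (n - 1) := count_pos_iff.mpr (by simp [hCeq])
    simp only [count_nil]
    omega
  subst hAnil hCeq
  have hBeq : B = (n - 1) :: n :: (P ++ [1]) ++ [n] :=
    append_cancel_right (by simpa using hw.trans hsW)
  rw [hBeq, sW, sPair_succ (by omega), if_pos (Nat.odd_iff.mp hodd), hS]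
  simp [insert2]

theorem append_cons_append_cons_eq_sW_succ_of_even (hn : 3 ≤ n) (heven : Even n)
    (hA : n + 1 ∉ A) (hB : n + 1 ∉ B) (hC : n + 1 ∉ C) (hw : A ++ B ++ C = sW n)
    (h : HasSProjections (n + 1) (A ++ (n + 1) :: (B ++ (n + 1) :: C))) :
    A ++ (n + 1) :: (B ++ (n + 1) :: C) = sW (n + 1) := by
  obtain ⟨P, G, hS, hG₁, hG, hG₂, hQ₁⟩ := exists_sPair_eq_of_even hn heven
  have hn4 : 4 ≤ n := by obtain ⟨k, rfl⟩ := heven; omega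
  have hsW : sW n = n :: (n - 2) :: (n - 1) :: (P ++ [1]) ++ (n - 1) :: n :: G := by rw [sW, hS]
  have hcn := count_eq_of_proj2_eq (a := 1) (b := 0) (c := 1) (by omega) hA hB hC
    (h.proj_succ_of_even n (by omega) (by omega) heven)
  have hc₂ := h.count_add_count_eq_one hA hB hC (v := n - 2) (by omega) (by omega) (by omega)
  have hc₁ := h.count_add_count_eq_one hA hB hC (v := n - 1) (by omega) (by omega) (by omega)
  have hc₀ := count_add_count_eq_one_of_proj2 (v := 1) (by omega) hA hB hC
    (h.proj_one_alternating (n + 1) (by omega) le_rfl heven.add_one)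
  have hApre : A <+: sW n := hw ▸ append_assoc A B C ▸ prefix_append A (B ++ C)
  have hCsuf : C <:+ sW n := hw ▸ suffix_append (A ++ B) C
  have hQsuf : (n - 1) :: n :: G <:+ sW n := by rw [hsW]; exact suffix_append _ _
  have hGC : n :: G <:+ C :=
    hCsuf.cons_suffix_of_count_lt ((suffix_cons _ _).trans hQsuf)
      (by rw [count_eq_zero.mpr hG]; omega)
  have hAeq : A = [n] := by
    have hC₂ : 0 < C.count (n - 2) :=
      count_pos_iff.mpr (hGC.subset (mem_cons_of_mem _ hG₂))
    have hA₁ : A <+: [n] :=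
      hApre.prefix_of_count_le (a := n - 2) (by rw [hsW]; exact ⟨_, rfl⟩) (by omega)
    rcases prefix_cons_iff.mp hA₁ with rfl | ⟨t, rfl, ht⟩
    · simp at hcn
    · rw [prefix_nil.mp ht]
  subst hAeq
  have hCeq : C = (n - 1) :: n :: G := by
    have hQC : (n - 1) :: n :: G <:+ C :=
      hCsuf.cons_suffix_of_count_lt hQsuf
        (by rw [count_eq_zero.mpr (mt mem_singleton.mp (by omega))] at hc₁
            rw [count_eq_zero.mpr hG₁]
            omega)
    have hCQ : C <:+ (n - 1) :: n :: G := by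
      refine hCsuf.suffix_of_count_le (a := 1) ⟨n :: (n - 2) :: (n - 1) :: P, by simp [hsW]⟩ ?_
      have : 0 < ((n - 1) :: n :: G).count 1 := count_pos_iff.mpr hQ₁
      omega
    exact hCQ.eq_of_length_le hQC.length_le
  subst hCeq
  have hBeq : B = (n - 2) :: (n - 1) :: (P ++ [1]) :=
    append_cancel_right (by simpa using hw.trans hsW)
  rw [hBeq, sW, sPair_succ (by omega),
    if_neg (Nat.not_odd_iff_even.mpr heven ∘ Nat.odd_iff.mpr), hS]
  simp [insert2]

end Insertion

theorem HasSProjections.eq_sW {n : ℕ} (hn : 3 ≤ n) {u : List ℕ} (h : HasSProjections n u) :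
    u = sW n := by
  induction n, hn using Nat.le_induction generalizing u with
  | base => exact h.eq_sW_three
  | succ n hn ih =>
    obtain ⟨A, B, C, rfl, hA, hB, hC⟩ :=
      exists_eq_append_cons_append_cons_of_count_eq_two (h.count_eq_two (n + 1) (by omega) le_rfl)
    have hw : A ++ B ++ C = sW n :=
      filter_bne_append_cons_append_cons hA hB hC ▸ ih (h.filter_bne hn)
    rcases Nat.even_or_odd n with heven | hodd
    · exact append_cons_append_cons_eq_sW_succ_of_even hn heven hA hB hC hw h
    · exact append_cons_append_cons_eq_sW_succ_of_odd hn hodd hA hB hC hw h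

/-- Implication (iii) → (iv) of Proposition 4.2: a word `u` in `x₁,…,xₙ` (`n ≥ 3`) in
which every variable occurs exactly twice, with `u[x₁,x₂,x₃] = (x₂x₃x₁)(x₃x₁x₂)`,
whose two-variable projections satisfy the stated conditions, equals `S n`. -/
theorem sW_unique (n : ℕ) (hn : 3 ≤ n) (u : List ℕ)
    (hvars : ∀ a ∈ u, 1 ≤ a ∧ a ≤ n)
    (hocc : ∀ i : ℕ, 1 ≤ i → i ≤ n → u.count i = 2)
    (h123 : u.filter (fun a => a == 1 || a == 2 || a == 3) = [2, 3, 1, 3, 1, 2])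
    (hodd : ∀ i : ℕ, 1 ≤ i → i < n → Odd i → proj2 u i (i+1) = [i+1, i, i, i+1])
    (heven : ∀ i : ℕ, 2 ≤ i → i < n → Even i → proj2 u i (i+1) = [i, i+1, i+1, i])
    (h23 : ∀ i j : ℕ, 1 ≤ i → i < j → j ≤ n → (j - i = 2 ∨ j - i = 3) →
      proj2 u i j = [i, j, i, j] ∨ proj2 u i j = [j, i, j, i])
    (h1j : ∀ j : ℕ, 3 ≤ j → j ≤ n → Odd j →
      proj2 u 1 j = [1, j, 1, j] ∨ proj2 u 1 j = [j, 1, j, 1]) :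
    u = sW n :=
  HasSProjections.eq_sW hn ⟨hvars, hocc, h123, hodd, heven, h23, h1j⟩
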